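/- arXiv:1808.09581 — 4 statements merged into one kernel-verified Lean document; each statement's English description precedes it below -/
import Mathlib

section
/- Let n ≥ 5 be an odd integer and let c = (1 2 … n) be the n-cycle in the symmetric group S_n. Then c is an even permutation, so the cyclic subgroup C = ⟨c⟩ (of order n) is contained in the alternating group A_n; the subgroup H of A_n consisting of even permutations fixing the letter n (a copy of A_{n-1}) satisfies H ∩ C = {e} and H C = A_n. In other words, the subgroups A_{n-1} and C_n = ⟨(1 2 … n)⟩ form an exact factorization of A_n. -/
/-!
The `n`-cycle `c` generates a subgroup `C` acting regularly on the `n` letters: transitively,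
since `c` is a single cycle through all of them, and freely, since a power of a cycle fixing a
point of its support is trivial. Freeness gives `H ∩ C = 1` for the stabilizer `H` of a letter.
Transitivity gives `A_n = H C`: for `σ ∈ A_n` pick `ρ ∈ C` sending `σ⁻¹ n` to `n`, so that
`σ ρ⁻¹` fixes `n`, and it is even because `c` is (`n` is odd).
-/

open Equiv Equiv.Perm

theorem Subgroup.exists_smul_eq_self_mul_of_forall_exists_smul_eq {G α : Type*} [Group G]
    [MulAction G α] {A K : Subgroup G} (hKA : K ≤ A) {x : α}
    (htrans : ∀ y : α, ∃ ρ ∈ K, ρ • y = x) {σ : G} (hσ : σ ∈ A) :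
    ∃ τ ∈ A, τ • x = x ∧ ∃ ρ ∈ K, σ = τ * ρ := by
  obtain ⟨ρ, hρK, hρ⟩ := htrans (σ⁻¹ • x)
  refine ⟨σ * ρ⁻¹, A.mul_mem hσ (A.inv_mem (hKA hρK)), ?_, ρ, hρK, by group⟩
  rw [mul_smul, inv_smul_eq_iff.mpr hρ.symm, smul_inv_smul]

namespace Equiv.Perm.IsCycle

variable {α : Type*} {σ ρ : Perm α} {x : α}

theorem exists_mem_zpowers_apply_eq {y : α} (hσ : IsCycle σ) (hx : σ x ≠ x) (hy : σ y ≠ y) :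
    ∃ ρ ∈ Subgroup.zpowers σ, ρ x = y := by
  obtain ⟨k, hk⟩ := hσ.exists_zpow_eq hx hy
  exact ⟨σ ^ k, Subgroup.zpow_mem_zpowers σ k, hk⟩

theorem eq_one_of_mem_zpowers_of_apply_eq [Finite α] (hσ : IsCycle σ) (hx : σ x ≠ x)
    (hρ : ρ ∈ Subgroup.zpowers σ) (hρx : ρ x = x) : ρ = 1 := by
  obtain ⟨k, rfl⟩ := mem_powers_iff_mem_zpowers.mpr hρ
  exact (hσ.pow_eq_one_iff' hx).mpr hρx

end Equiv.Perm.IsCycle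

theorem finRotate_apply_ne {n : ℕ} (hn : 2 ≤ n) (i : Fin n) : finRotate n i ≠ i :=
  mem_support.mp (by simp [support_finRotate_of_le hn])

theorem finRotate_mem_alternatingGroup {n : ℕ} (hodd : Odd n) :
    finRotate n ∈ alternatingGroup (Fin n) := by
  obtain ⟨k, rfl⟩ := hodd
  exact finRotate_bit1_mem_alternatingGroup

theorem card_zpowers_finRotate {n : ℕ} (hn : 2 ≤ n) :
    Nat.card (Subgroup.zpowers (finRotate n)) = n := by
  rw [Nat.card_zpowers, (isCycle_finRotate_of_le hn).orderOf, support_finRotate_of_le hn,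
    Finset.card_univ, Fintype.card_fin]

/-- for odd `n ≥ 5`, the `n`-cycle `c = (1 2 … n)` (realized as
`finRotate n : Equiv.Perm (Fin n)`) is an even permutation, so the cyclic
subgroup `C = ⟨c⟩`, of order `n`, is contained in the alternating group `A_n`;
the copy of `A_{n-1}` inside `A_n` consisting of even permutations fixing the
last letter meets `C` trivially, and `A_{n-1} · C = A_n`: the subgroups
`A_{n-1}` and `C_n` form an exact factorization of `A_n`. -/
theorem alternating_exact_factorization (n : ℕ) (hn : 5 ≤ n) (hodd : Odd n) :
    -- `c` is even, i.e. lies in the alternating group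
    finRotate n ∈ alternatingGroup (Fin n) ∧
    -- hence the cyclic subgroup `C = ⟨c⟩` is contained in `A_n`
    Subgroup.zpowers (finRotate n) ≤ alternatingGroup (Fin n) ∧
    -- `C` has order `n`
    Nat.card (Subgroup.zpowers (finRotate n)) = n ∧
    -- `H ∩ C = {e}`, where `H = A_{n-1}` is the set of even permutations fixing
    -- the letter `n` (the last element of `Fin n`)
    (∀ σ : Equiv.Perm (Fin n),
      σ ∈ alternatingGroup (Fin n) → σ (⟨n - 1, by omega⟩ : Fin n) = ⟨n - 1, by omega⟩ →
      σ ∈ Subgroup.zpowers (finRotate n) → σ = 1) ∧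
    -- `H C = A_n`
    (∀ σ ∈ alternatingGroup (Fin n),
      ∃ τ ∈ alternatingGroup (Fin n),
        τ (⟨n - 1, by omega⟩ : Fin n) = ⟨n - 1, by omega⟩ ∧
        ∃ ρ ∈ Subgroup.zpowers (finRotate n), σ = τ * ρ) := by
  have h2 : 2 ≤ n := by omega
  have hcycle := isCycle_finRotate_of_le h2
  have hmem := finRotate_mem_alternatingGroup hodd
  have hle : Subgroup.zpowers (finRotate n) ≤ alternatingGroup (Fin n) :=
    Subgroup.zpowers_le.mpr hmem
  refine ⟨hmem, hle, card_zpowers_finRotate h2, fun σ _ hfix hσ => ?_, fun σ hσ => ?_⟩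
  · exact hcycle.eq_one_of_mem_zpowers_of_apply_eq (finRotate_apply_ne h2 _) hσ hfix
  · exact Subgroup.exists_smul_eq_self_mul_of_forall_exists_smul_eq hle
      (fun y => hcycle.exists_mem_zpowers_apply_eq (finRotate_apply_ne h2 y)
        (finRotate_apply_ne h2 _)) hσ
end

section
/- Let H be a Hopf algebra over a field k. Suppose that for all a, b, c ∈ H the identity S(c₍₂₎) a₍₁₎ c₍₃₎ ⊗ S(c₍₄₎) S(a₍₂₎) S²(c₍₁₎) a₍₃₎ b c₍₅₎ = a ⊗ bc holds in H ⊗ H (as an equality of the corresponding linear maps H ⊗ H ⊗ H → H ⊗ H built from the multiplication, comultiplication and antipode of H). Then the adjoint action of H on itself is trivial, and consequently H is commutative. -/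
/-!
Take `b = 1` in the identity and apply `id ⊗ ε`. Since `ε` is multiplicative and `ε ∘ S = ε`,
counitality collapses the legs `a₍₂₎, a₍₃₎, c₍₁₎, c₍₄₎, c₍₅₎`, and what is left is
`S(c₍₁₎) a c₍₂₎ = ε(c) a`: the adjoint action is trivial. Commutativity follows, as
`b a = b₍₁₎ (a ↼ b₍₂₎) = b₍₁₎ S(b₍₂₎) a b₍₃₎ = a b` by coassociativity and the antipode axiom.
-/

open TensorProduct
open Coalgebra (comul counit)
open HopfAlgebra
open scoped Coalgebra

namespace TensorProduct

variable {R M N : Type*} [CommSemiring R] [AddCommMonoid M] [Module R M]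
  [AddCommMonoid N] [Module R N]

-- Sums are indexed by `Fin k`: the identity quantifies only over index types in `Type`,
-- while the Hopf algebra may live in a higher universe.
theorem exists_sum_tmul_of_forall_exists_sum {α : Type*} (F : α → N)
    (hF : ∀ n, ∃ (k : ℕ) (d : Fin k → α), n = ∑ i, F (d i)) (z : M ⊗[R] N) :
    ∃ (k : ℕ) (d : Fin k → M × α), z = ∑ i, (d i).1 ⊗ₜ[R] F (d i).2 := by
  induction z with
  | zero => exact ⟨0, finZeroElim, by simp⟩
  | tmul m n =>
    obtain ⟨k, d, rfl⟩ := hF n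
    exact ⟨k, fun i => (m, d i), by simp [tmul_sum]⟩
  | add x y hx hy =>
    obtain ⟨kx, dx, rfl⟩ := hx
    obtain ⟨ky, dy, rfl⟩ := hy
    exact ⟨kx + ky, Fin.addCases dx dy, by simp [Fin.sum_univ_add]⟩

theorem exists_sum_tmul_tmul (z : M ⊗[R] (M ⊗[R] M)) :
    ∃ (k : ℕ) (m₁ m₂ m₃ : Fin k → M), z = ∑ i, m₁ i ⊗ₜ[R] (m₂ i ⊗ₜ[R] m₃ i) := by
  have h₁ := exists_sum_tmul_of_forall_exists_sum (R := R) (M := M) (id : M → M)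
    fun n => ⟨1, fun _ => n, by simp⟩
  obtain ⟨k, d, rfl⟩ := exists_sum_tmul_of_forall_exists_sum
    (fun q : M × M => q.1 ⊗ₜ[R] q.2) h₁ z
  exact ⟨k, fun i => (d i).1, fun i => (d i).2.1, fun i => (d i).2.2, rfl⟩

theorem exists_sum_tmul_tmul_tmul_tmul (z : M ⊗[R] (M ⊗[R] (M ⊗[R] (M ⊗[R] M)))) :
    ∃ (k : ℕ) (m₁ m₂ m₃ m₄ m₅ : Fin k → M),
      z = ∑ i, m₁ i ⊗ₜ[R] (m₂ i ⊗ₜ[R] (m₃ i ⊗ₜ[R] (m₄ i ⊗ₜ[R] m₅ i))) := by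
  have h₁ := exists_sum_tmul_of_forall_exists_sum (R := R) (M := M) (id : M → M)
    fun n => ⟨1, fun _ => n, by simp⟩
  have h₂ := exists_sum_tmul_of_forall_exists_sum (R := R) (M := M)
    (fun q : M × M => q.1 ⊗ₜ[R] q.2) h₁
  have h₃ := exists_sum_tmul_of_forall_exists_sum (R := R) (M := M)
    (fun q : M × M × M => q.1 ⊗ₜ[R] (q.2.1 ⊗ₜ[R] q.2.2)) h₂
  obtain ⟨k, d, rfl⟩ := exists_sum_tmul_of_forall_exists_sum
    (fun q : M × M × M × M => q.1 ⊗ₜ[R] (q.2.1 ⊗ₜ[R] (q.2.2.1 ⊗ₜ[R] q.2.2.2))) h₃ z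
  exact ⟨k, fun i => (d i).1, fun i => (d i).2.1, fun i => (d i).2.2.1, fun i => (d i).2.2.2.1,
    fun i => (d i).2.2.2.2, rfl⟩

end TensorProduct

section Coalgebra

variable {R A V : Type*} [CommSemiring R] [AddCommMonoid A] [Module R A] [Coalgebra R A]
  [AddCommMonoid V] [Module R V]

variable (R A) in
noncomputable def Coalgebra.comul₂ : A →ₗ[R] A ⊗[R] (A ⊗[R] A) :=
  comul.lTensor A ∘ₗ comul

variable (R A) in
noncomputable def Coalgebra.comul₄ : A →ₗ[R] A ⊗[R] (A ⊗[R] (A ⊗[R] (A ⊗[R] A))) :=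
  ((comul.lTensor A).lTensor A).lTensor A ∘ₗ (comul.lTensor A).lTensor A ∘ₗ
    comul.lTensor A ∘ₗ comul

theorem Coalgebra.sum_counit_right_smul {ι : Type*} {a : A} (𝓡 : Repr R a ι) :
    ∑ i ∈ 𝓡.index, counit (R := R) (𝓡.right i) • 𝓡.left i = a := by
  simpa only [map_sum, _root_.TensorProduct.rid_tmul, one_smul] using
    congr(_root_.TensorProduct.rid R A $(sum_tmul_counit_eq 𝓡))

theorem Coalgebra.sum_counit_mul_counit_smul_of_comul₂_eq {ι : Type*} {s : Finset ι} {a : A}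
    {a₁ a₂ a₃ : ι → A} (ha : comul₂ R A a = ∑ i ∈ s, a₁ i ⊗ₜ[R] (a₂ i ⊗ₜ[R] a₃ i)) :
    ∑ i ∈ s, (counit (R := R) (a₂ i) * counit (R := R) (a₃ i)) • a₁ i = a := by
  let dropLast : A ⊗[R] A →ₗ[R] A :=
    (_root_.TensorProduct.rid R A).toLinearMap ∘ₗ counit.lTensor A
  have collapse : dropLast ∘ₗ dropLast.lTensor A ∘ₗ comul₂ R A = LinearMap.id := by
    simp [dropLast, comul₂, coassoc_simps, CoassocSimps.map_counit_comp_comul_right]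
  have := LinearMap.congr_fun collapse a
  simp only [LinearMap.comp_apply] at this
  rw [ha] at this
  simpa [dropLast, map_sum, mul_comm, smul_smul] using this

theorem Coalgebra.sum_counit_smul_of_comul₄_eq {κ : Type*} {t : Finset κ} {c : A}
    {c₁ c₂ c₃ c₄ c₅ : κ → A}
    (hc : comul₄ R A c = ∑ j ∈ t, c₁ j ⊗ₜ[R] (c₂ j ⊗ₜ[R] (c₃ j ⊗ₜ[R] (c₄ j ⊗ₜ[R] c₅ j))))
    (g : A ⊗[R] A →ₗ[R] V) :
    ∑ j ∈ t, (counit (R := R) (c₁ j) * counit (R := R) (c₄ j) * counit (R := R) (c₅ j)) •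
      g (c₂ j ⊗ₜ[R] c₃ j) = g (comul c) := by
  let dropLast : A ⊗[R] A →ₗ[R] A :=
    (_root_.TensorProduct.rid R A).toLinearMap ∘ₗ counit.lTensor A
  have collapse : ((_root_.TensorProduct.lid R V).toLinearMap ∘ₗ map counit g ∘ₗ
      (dropLast.lTensor A).lTensor A ∘ₗ ((dropLast.lTensor A).lTensor A).lTensor A) ∘ₗ
        comul₄ R A = g ∘ₗ comul := by
    simp [dropLast, comul₄, coassoc_simps, CoassocSimps.map_counit_comp_comul_right,
      CoassocSimps.map_counit_comp_comul_left]
  have := LinearMap.congr_fun collapse c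
  simp only [LinearMap.comp_apply] at this
  rw [hc] at this
  simpa [dropLast, map_sum, smul_smul, mul_comm, mul_left_comm] using this

end Coalgebra

section HopfAlgebra

variable {R H : Type*} [CommSemiring R] [Semiring H] [HopfAlgebra R H]

-- `conjMap x (comul h)` is the adjoint action `x ↼ h`.
variable (R) in
noncomputable def HopfAlgebra.conjMap (x : H) : H ⊗[R] H →ₗ[R] H :=
  LinearMap.mul' R H ∘ₗ map (LinearMap.mulRight R x ∘ₗ antipode R) LinearMap.id

@[simp] theorem HopfAlgebra.conjMap_tmul (x y z : H) :
    conjMap R x (y ⊗ₜ[R] z) = antipode R y * x * z := by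
  simp [conjMap]

theorem HopfAlgebra.mul_comm_of_conjMap_comul_eq_counit_smul
    (hH : ∀ x h : H, conjMap R x (comul h) = counit (R := R) h • x) (a b : H) :
    a * b = b * a := by
  let 𝓡 := ℛ R b
  have coassoc :=
    Coalgebra.sum_tmul_tmul_eq 𝓡 (fun i => ℛ R (𝓡.left i)) (fun i => ℛ R (𝓡.right i))
  have expand := congr(LinearMap.mul' R H (LinearMap.lTensor H (conjMap R a) $coassoc))
  simp only [map_sum, LinearMap.lTensor_tmul, conjMap_tmul, LinearMap.mul'_apply] at expand
  calc a * b = ∑ i ∈ 𝓡.index, ∑ j ∈ (ℛ R (𝓡.left i)).index, (ℛ R (𝓡.left i)).left j *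
        (antipode R ((ℛ R (𝓡.left i)).right j) * a * 𝓡.right i) := by
        simp_rw [← mul_assoc, ← Finset.sum_mul, sum_mul_antipode_eq_smul, smul_mul_assoc, one_mul,
          ← mul_smul_comm, ← Finset.mul_sum, Coalgebra.sum_counit_smul]
    _ = ∑ i ∈ 𝓡.index, ∑ j ∈ (ℛ R (𝓡.right i)).index, 𝓡.left i *
        (antipode R ((ℛ R (𝓡.right i)).left j) * a * (ℛ R (𝓡.right i)).right j) := expand
    _ = b * a := by
        simp_rw [← Finset.mul_sum, ← conjMap_tmul (R := R), ← map_sum, (ℛ R _).eq, hH,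
          mul_smul_comm, ← smul_mul_assoc, ← Finset.sum_mul, Coalgebra.sum_counit_right_smul]

theorem HopfAlgebra.conjMap_comul_eq_counit_smul_of_identity {ι κ : Type*} {s : Finset ι}
    {t : Finset κ} {x h : H} {a₁ a₂ a₃ : ι → H} {c₁ c₂ c₃ c₄ c₅ : κ → H}
    (ha : Coalgebra.comul₂ R H x = ∑ i ∈ s, a₁ i ⊗ₜ[R] (a₂ i ⊗ₜ[R] a₃ i))
    (hc : Coalgebra.comul₄ R H h =
      ∑ j ∈ t, c₁ j ⊗ₜ[R] (c₂ j ⊗ₜ[R] (c₃ j ⊗ₜ[R] (c₄ j ⊗ₜ[R] c₅ j))))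
    (hid : ∑ i ∈ s, ∑ j ∈ t, (antipode R (c₂ j) * a₁ i * c₃ j) ⊗ₜ[R]
        (antipode R (c₄ j) * antipode R (a₂ i) * antipode R (antipode R (c₁ j)) * a₃ i * c₅ j) =
      x ⊗ₜ[R] h) :
    conjMap R x (comul h) = counit (R := R) h • x := by
  have collapsed := congr(_root_.TensorProduct.rid R H (counit.lTensor H $hid))
  simp only [map_sum, LinearMap.lTensor_tmul, _root_.TensorProduct.rid_tmul,
    Bialgebra.counit_mul, counit_antipode] at collapsed
  calc conjMap R x (comul h)
      = ∑ j ∈ t, (counit (R := R) (c₁ j) * counit (R := R) (c₄ j) * counit (R := R) (c₅ j)) •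
          conjMap R x (c₂ j ⊗ₜ[R] c₃ j) := (Coalgebra.sum_counit_smul_of_comul₄_eq hc _).symm
    _ = ∑ j ∈ t, (counit (R := R) (c₁ j) * counit (R := R) (c₄ j) * counit (R := R) (c₅ j)) •
          (antipode R (c₂ j) *
            (∑ i ∈ s, (counit (R := R) (a₂ i) * counit (R := R) (a₃ i)) • a₁ i) * c₃ j) := by
        rw [Coalgebra.sum_counit_mul_counit_smul_of_comul₂_eq ha]; simp
    _ = counit (R := R) h • x := by
        rw [← collapsed, Finset.sum_comm]
        simp only [Finset.mul_sum, Finset.sum_mul, Finset.smul_sum, mul_smul_comm,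
          smul_mul_assoc, smul_smul]
        exact Finset.sum_congr rfl fun _ _ => Finset.sum_congr rfl fun _ _ => by ring_nf

end HopfAlgebra

/-- if in a Hopf algebra `H` over a field `k` the identity
`S(c₍₂₎) a₍₁₎ c₍₃₎ ⊗ S(c₍₄₎) S(a₍₂₎) S²(c₍₁₎) a₍₃₎ b c₍₅₎ = a ⊗ bc` holds for all
`a, b, c ∈ H` (Sweedler sums expressed via finite decompositions of the iterated
comultiplications `Δ² a` and `Δ⁴ c`), then the adjoint action
`x ↼ h = S(h₍₁₎) x h₍₂₎` of `H` on itself is trivial, and consequently `H` is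
commutative. -/
theorem adjoint_trivial_of_identity (k H : Type*) [Field k] [Ring H]
    [HopfAlgebra k H]
    (hyp : ∀ (a b c : H) (ι κ : Type) (s : Finset ι) (t : Finset κ)
      (a₁ a₂ a₃ : ι → H) (c₁ c₂ c₃ c₄ c₅ : κ → H),
      (LinearMap.lTensor H (Coalgebra.comul (R := k)))
          (Coalgebra.comul (R := k) a) =
        ∑ i ∈ s, a₁ i ⊗ₜ[k] (a₂ i ⊗ₜ[k] a₃ i) →
      (LinearMap.lTensor H (LinearMap.lTensor H (LinearMap.lTensor H
            (Coalgebra.comul (R := k)))))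
          ((LinearMap.lTensor H (LinearMap.lTensor H (Coalgebra.comul (R := k))))
            ((LinearMap.lTensor H (Coalgebra.comul (R := k)))
              (Coalgebra.comul (R := k) c))) =
        ∑ j ∈ t, c₁ j ⊗ₜ[k] (c₂ j ⊗ₜ[k] (c₃ j ⊗ₜ[k] (c₄ j ⊗ₜ[k] c₅ j))) →
      ∑ i ∈ s, ∑ j ∈ t,
        (HopfAlgebra.antipode (R := k) (c₂ j) * a₁ i * c₃ j) ⊗ₜ[k]
          (HopfAlgebra.antipode (R := k) (c₄ j) *
            HopfAlgebra.antipode (R := k) (a₂ i) *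
            HopfAlgebra.antipode (R := k) (HopfAlgebra.antipode (R := k) (c₁ j)) *
            a₃ i * b * c₅ j) =
        a ⊗ₜ[k] (b * c)) :
    -- the adjoint action of `H` on itself is trivial ...
    (∀ (x h : H) (ι : Type) (s : Finset ι) (h₁ h₂ : ι → H),
      Coalgebra.comul (R := k) h = ∑ i ∈ s, h₁ i ⊗ₜ[k] h₂ i →
      ∑ i ∈ s, HopfAlgebra.antipode (R := k) (h₁ i) * x * h₂ i =
        Coalgebra.counit (R := k) h • x) ∧
    -- ... and consequently `H` is commutative
    (∀ a b : H, a * b = b * a) := by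
  have adjoint_trivial (x h : H) : conjMap k x (comul h) = counit (R := k) h • x := by
    obtain ⟨n, a₁, a₂, a₃, ha⟩ := exists_sum_tmul_tmul (Coalgebra.comul₂ k H x)
    obtain ⟨m, c₁, c₂, c₃, c₄, c₅, hc⟩ :=
      exists_sum_tmul_tmul_tmul_tmul (Coalgebra.comul₄ k H h)
    refine conjMap_comul_eq_counit_smul_of_identity ha hc ?_
    simpa only [mul_one, one_mul] using
      hyp x 1 h _ _ Finset.univ Finset.univ a₁ a₂ a₃ c₁ c₂ c₃ c₄ c₅ ha hc
  refine ⟨fun x h ι s h₁ h₂ hΔ => ?_, mul_comm_of_conjMap_comul_eq_counit_smul adjoint_trivial⟩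
  simpa [hΔ, map_sum] using adjoint_trivial x h
end

section
/- Let H be a commutative Hopf algebra over a field k and let T : H ⊗ H → H ⊗ H be the linear map determined by T(a ⊗ b) = b₍₁₎ ⊗ S(b₍₂₎) a b₍₃₎. Then T is an involution: T ∘ T = id_{H ⊗ H}. -/
/-!
In a commutative Hopf algebra `S(b₍₂₎) a b₍₃₎ = a S(b₍₂₎) b₍₃₎`, and the antipode axiom collapses
`S(b₍₂₎) b₍₃₎` to `ε(b₍₂₎)`; counitality then turns `T(a ⊗ b)` into `b ⊗ a`. So `T` is the flip.
-/

open TensorProduct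

namespace TensorProduct

variable {R M N P : Type*} [CommSemiring R] [AddCommMonoid M] [AddCommMonoid N]
  [AddCommMonoid P] [Module R M] [Module R N] [Module R P]

lemma exists_sum_tmul_tmul_eq (x : M ⊗[R] (N ⊗[R] P)) :
    ∃ (k : ℕ) (m : Fin k → M) (n : Fin k → N) (p : Fin k → P),
      x = ∑ j, m j ⊗ₜ (n j ⊗ₜ p j) := by
  induction x with
  | zero => exact ⟨0, finZeroElim, finZeroElim, finZeroElim, by simp⟩
  | tmul m y =>
    induction y with
    | zero => exact ⟨0, finZeroElim, finZeroElim, finZeroElim, by simp⟩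
    | tmul n p => exact ⟨1, fun _ ↦ m, fun _ ↦ n, fun _ ↦ p, by simp⟩
    | add y z hy hz =>
      obtain ⟨ky, my, ny, py, hy⟩ := hy
      obtain ⟨kz, mz, nz, pz, hz⟩ := hz
      use ky + kz, Fin.addCases my mz, Fin.addCases ny nz, Fin.addCases py pz
      simp [tmul_add, hy, hz, Fin.sum_univ_add]
  | add x y hx hy =>
    obtain ⟨kx, mx, nx, px, rfl⟩ := hx
    obtain ⟨ky, my, ny, py, rfl⟩ := hy
    use kx + ky, Fin.addCases mx my, Fin.addCases nx ny, Fin.addCases px py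
    simp [Fin.sum_univ_add]

end TensorProduct

namespace HopfAlgebra

variable {R A : Type*} [CommSemiring R] [CommSemiring A] [HopfAlgebra R A]

/-- `u ⊗ v ↦ S(u) a v` -/
noncomputable def antipodeMulMul (a : A) : A ⊗[R] A →ₗ[R] A :=
  LinearMap.mulLeft R a ∘ₗ LinearMap.mul' R A ∘ₗ (antipode R).rTensor A

lemma antipodeMulMul_tmul (a u v : A) :
    antipodeMulMul (R := R) a (u ⊗ₜ v) = antipode R u * a * v := by
  simp only [antipodeMulMul, LinearMap.comp_apply, LinearMap.rTensor_tmul, LinearMap.mul'_apply,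
    LinearMap.mulLeft_apply]
  ring

lemma antipodeMulMul_comp_comul (a : A) :
    antipodeMulMul a ∘ₗ Coalgebra.comul =
      LinearMap.toSpanSingleton R A a ∘ₗ Coalgebra.counit := by
  ext y
  simp [antipodeMulMul, Algebra.smul_def, mul_comm]

lemma lTensor_antipodeMulMul_lTensor_comul_comul (a b : A) :
    (antipodeMulMul a).lTensor A ((Coalgebra.comul (R := R)).lTensor A (Coalgebra.comul b)) =
      b ⊗ₜ a := by
  rw [← LinearMap.comp_apply, ← LinearMap.lTensor_comp, antipodeMulMul_comp_comul,
    LinearMap.lTensor_comp, LinearMap.comp_apply, Coalgebra.lTensor_counit_comul]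
  simp

lemma sum_tmul_antipode_mul_mul_eq {ι : Type*} (s : Finset ι) (a b : A) (b₁ b₂ b₃ : ι → A)
    (hb : (Coalgebra.comul (R := R)).lTensor A (Coalgebra.comul b) =
      ∑ i ∈ s, b₁ i ⊗ₜ[R] (b₂ i ⊗ₜ[R] b₃ i)) :
    ∑ i ∈ s, b₁ i ⊗ₜ[R] (antipode R (b₂ i) * a * b₃ i) = b ⊗ₜ a := by
  rw [← lTensor_antipodeMulMul_lTensor_comul_comul a b, hb, map_sum]
  simp [antipodeMulMul_tmul]

end HopfAlgebra

/-- let `H` be a commutative Hopf algebra over a field `k` and let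
`T : H ⊗ H → H ⊗ H` be the linear map determined by
`T(a ⊗ b) = b₍₁₎ ⊗ S(b₍₂₎) a b₍₃₎` (Sweedler sums expressed via finite
decompositions of the iterated comultiplication). Then `T` is an involution:
`T ∘ T = id`. -/
theorem T_involutive_of_commutative (k H : Type*) [Field k] [CommRing H]
    [HopfAlgebra k H]
    (T : H ⊗[k] H →ₗ[k] H ⊗[k] H)
    (hT : ∀ (a b : H) (ι : Type) (s : Finset ι) (b₁ b₂ b₃ : ι → H),
      (LinearMap.lTensor H (Coalgebra.comul (R := k)))
          (Coalgebra.comul (R := k) b) =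
        ∑ i ∈ s, b₁ i ⊗ₜ[k] (b₂ i ⊗ₜ[k] b₃ i) →
      T (a ⊗ₜ[k] b) =
        ∑ i ∈ s, b₁ i ⊗ₜ[k] (HopfAlgebra.antipode (R := k) (b₂ i) * a * b₃ i)) :
    T ∘ₗ T = LinearMap.id := by
  have hT_flip : ∀ a b : H, T (a ⊗ₜ b) = b ⊗ₜ a := by
    intro a b
    obtain ⟨n, b₁, b₂, b₃, hb⟩ := exists_sum_tmul_tmul_eq
      ((Coalgebra.comul (R := k)).lTensor H (Coalgebra.comul b))
    rw [hT a b _ Finset.univ b₁ b₂ b₃ hb]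
    exact HopfAlgebra.sum_tmul_antipode_mul_mul_eq _ a b b₁ b₂ b₃ hb
  ext a b
  simp [hT_flip]
end

section
/- Let B be a braided monoidal category with braiding c and let (A, m, η) be a commutative monoid object in B which is a symmetric object, i.e. c_{A,A} ∘ c_{A,A} = id_{A⊗A}. Then the free right A-module A ⊗ A is dyslectic: μ_{A⊗A} ∘ c_{A, A⊗A} ∘ c_{A⊗A, A} = μ_{A⊗A} as morphisms (A ⊗ A) ⊗ A → A ⊗ A. -/
open CategoryTheory MonoidalCategory

/-!
By the hexagon axioms the double braiding of `X ⊗ A` with `A` factors as a braiding of the two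
copies of `A`, the double braiding of `X` with `A`, and a second braiding of the two copies of
`A`. When `X` and `A` have trivial double braiding the middle factor disappears, and the two
remaining braidings of `A` with itself are absorbed by the commutative multiplication. For
`X = A` this is symmetry of `A`.
-/

namespace CategoryTheory.BraidedCategory

variable {B : Type*} [Category B] [MonoidalCategory B] [BraidedCategory B]

theorem braiding_tensor_left_hom_comp_braiding_tensor_right_hom (X Y Z : B) :
    (β_ (X ⊗ Y) Z).hom ≫ (β_ Z (X ⊗ Y)).hom =
      (α_ X Y Z).hom ≫ X ◁ (β_ Y Z).hom ≫ (α_ X Z Y).inv ≫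
        ((β_ X Z).hom ≫ (β_ Z X).hom) ▷ Y ≫ (α_ X Z Y).hom ≫ X ◁ (β_ Z Y).hom ≫
          (α_ X Y Z).inv := by
  simp only [braiding_tensor_left_hom, braiding_tensor_right_hom, comp_whiskerRight,
    Category.assoc, Iso.hom_inv_id_assoc]

end CategoryTheory.BraidedCategory

theorem free_module_dyslectic_of_braiding_comp_braiding_eq_id {B : Type*} [Category B]
    [MonoidalCategory B] [BraidedCategory B] {A : B} [MonObj A] [IsCommMonObj A] (X : B)
    (h : (β_ X A).hom ≫ (β_ A X).hom = 𝟙 (X ⊗ A)) :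
    (β_ (X ⊗ A) A).hom ≫ (β_ A (X ⊗ A)).hom ≫ (α_ X A A).hom ≫ X ◁ MonObj.mul =
      (α_ X A A).hom ≫ X ◁ MonObj.mul := by
  rw [reassoc_of% BraidedCategory.braiding_tensor_left_hom_comp_braiding_tensor_right_hom, h,
    id_whiskerRight, Category.id_comp, Iso.inv_hom_id_assoc, Iso.inv_hom_id_assoc,
    ← whiskerLeft_comp, ← whiskerLeft_comp, IsCommMonObj.mul_comm, IsCommMonObj.mul_comm]

/-- let `B` be a braided monoidal category and `(A, m, η)` a
commutative monoid object in `B` which is a symmetric object, i.e.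
`c_{A,A} ∘ c_{A,A} = id`. Then the free right `A`-module `A ⊗ A` is dyslectic:
`μ_{A⊗A} ∘ c_{A,A⊗A} ∘ c_{A⊗A,A} = μ_{A⊗A}` as morphisms
`(A ⊗ A) ⊗ A ⟶ A ⊗ A`, where `μ_{A⊗A} = (id_A ⊗ m) ∘ α_{A,A,A}`.
(Compositions are written in diagrammatic order `≫`.) -/
theorem free_module_dyslectic_of_symmetric {B : Type*} [Category B]
    [MonoidalCategory B] [BraidedCategory B] (A : Mon B)
    (hcomm : (β_ A.X A.X).hom ≫ MonObj.mul (X := A.X) = MonObj.mul (X := A.X))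
    (hsym : (β_ A.X A.X).hom ≫ (β_ A.X A.X).hom = 𝟙 (A.X ⊗ A.X)) :
    (β_ (A.X ⊗ A.X) A.X).hom ≫ (β_ A.X (A.X ⊗ A.X)).hom ≫
        (α_ A.X A.X A.X).hom ≫ (A.X ◁ MonObj.mul (X := A.X)) =
      (α_ A.X A.X A.X).hom ≫ (A.X ◁ MonObj.mul (X := A.X)) :=
  have : IsCommMonObj A.X := ⟨hcomm⟩
  free_module_dyslectic_of_braiding_comp_braiding_eq_id A.X hsym
end
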